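/- arXiv:2603.29001 — 3 statements merged into one kernel-verified Lean document; each statement's English description precedes it below -/
import Mathlib

section
/- Let A, B ∈ ℝ^{N×s} have full column rank, with thin QR decompositions A = Q_A R_A and B = Q_B R_B, and let Q_Aᵀ Q_B = U Σ Vᵀ be a singular value decomposition with Σ = diag(σ_1,…,σ_s). For each i ∈ {1,…,s}, the vector v_i := R_A⁻¹ u_i, where u_i is the i-th column of U, satisfies: (1) (I_s − (A†B)(B†A)) v_i = (1 − σ_i²) v_i, and (2) A v_i = Q_A u_i, which is a unit vector in the column space of A. -/
open Matrix

/-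
For a thin QR factorization `A = Q_A R_A` the pseudoinverse is `A† = R_A⁻¹ Q_Aᵀ`, so with
`C = Q_Aᵀ Q_B` the product `(A†B)(B†A) = R_A⁻¹ (C Cᵀ) R_A` is similar to `C Cᵀ = U Σ² Uᵀ`.
The columns `uᵢ` of `U` are eigenvectors of `C Cᵀ` for `σᵢ²`, hence `R_A⁻¹ uᵢ` is an eigenvector
of `I − (A†B)(B†A)` for `1 − σᵢ²`; and `A R_A⁻¹ uᵢ = Q_A uᵢ` is a column of `Q_A U`, which has
orthonormal columns.
-/

/-- The four Penrose conditions characterizing the Moore–Penrose pseudoinverse `Md` of `M`. -/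
def IsMoorePenrose {N s : ℕ} (M : Matrix (Fin N) (Fin s) ℝ)
    (Md : Matrix (Fin s) (Fin N) ℝ) : Prop :=
  M * Md * M = M ∧ Md * M * Md = Md ∧ (M * Md)ᵀ = M * Md ∧ (Md * M)ᵀ = Md * M

namespace IsMoorePenrose

variable {N s : ℕ} {M : Matrix (Fin N) (Fin s) ℝ} {X Y : Matrix (Fin s) (Fin N) ℝ}

theorem transpose (h : IsMoorePenrose M X) : IsMoorePenrose Mᵀ Xᵀ := by
  obtain ⟨h1, h2, h3, h4⟩ := h
  refine ⟨?_, ?_, ?_, ?_⟩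
  · rw [← transpose_mul, ← transpose_mul, ← Matrix.mul_assoc, h1]
  · rw [← transpose_mul, ← transpose_mul, ← Matrix.mul_assoc, h2]
  · simpa only [transpose_mul, transpose_transpose] using h4.symm
  · simpa only [transpose_mul, transpose_transpose] using h3.symm

theorem mul_eq_mul (hX : IsMoorePenrose M X) (hY : IsMoorePenrose M Y) : M * X = M * Y := by
  obtain ⟨hX1, -, hX3, -⟩ := hX
  obtain ⟨hY1, -, hY3, -⟩ := hY
  calc M * X = (M * Y * (M * X))ᵀ := by rw [← Matrix.mul_assoc, hY1, hX3]
    _ = M * X * (M * Y) := by rw [transpose_mul, hX3, hY3]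
    _ = M * Y := by rw [← Matrix.mul_assoc, hX1]

theorem unique (hX : IsMoorePenrose M X) (hY : IsMoorePenrose M Y) : X = Y := by
  have hXM : X * M = Y * M := by
    simpa using congrArg Matrix.transpose (hX.transpose.mul_eq_mul hY.transpose)
  calc X = X * (M * X) := by rw [← Matrix.mul_assoc, hX.2.1]
    _ = Y * M * Y := by rw [hX.mul_eq_mul hY, ← Matrix.mul_assoc, hXM]
    _ = Y := hY.2.1

end IsMoorePenrose

theorem isMoorePenrose_of_qr {N s : ℕ} {A Q : Matrix (Fin N) (Fin s) ℝ}
    {R : Matrix (Fin s) (Fin s) ℝ} (hA : A = Q * R) (hQ : Qᵀ * Q = 1) (hR : IsUnit R.det) :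
    IsMoorePenrose A (R⁻¹ * Qᵀ) := by
  have hleft : R⁻¹ * Qᵀ * A = 1 := by
    rw [hA, Matrix.mul_assoc, ← Matrix.mul_assoc Qᵀ, hQ, Matrix.one_mul, nonsing_inv_mul _ hR]
  have hproj : A * (R⁻¹ * Qᵀ) = Q * Qᵀ := by
    rw [hA, Matrix.mul_assoc, ← Matrix.mul_assoc R, mul_nonsing_inv _ hR, Matrix.one_mul]
  refine ⟨?_, ?_, ?_, ?_⟩
  · rw [Matrix.mul_assoc, hleft, Matrix.mul_one]
  · rw [hleft, Matrix.one_mul]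
  · rw [hproj, transpose_mul, transpose_transpose]
  · rw [hleft, transpose_one]

section

variable {m n p : Type*} [Fintype m] [DecidableEq n]

theorem sum_sq_col_eq_one {W : Matrix m n ℝ} (hW : Wᵀ * W = 1) (i : n) :
    ∑ k, W k i ^ 2 = 1 := by
  simpa [Matrix.mul_apply, sq] using congrFun (congrFun hW i) i

variable [Fintype n]

theorem inv_mul_transpose_mul_mul_inv_mul_transpose_mul {A B QA QB : Matrix m n ℝ}
    {RA RB : Matrix n n ℝ} (hA : A = QA * RA) (hB : B = QB * RB) (hRB : IsUnit RB.det) :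
    RA⁻¹ * QAᵀ * B * (RB⁻¹ * QBᵀ * A) = RA⁻¹ * ((QAᵀ * QB) * (QAᵀ * QB)ᵀ) * RA := by
  rw [hA, hB, transpose_mul, transpose_transpose]
  simp only [Matrix.mul_assoc]
  rw [← Matrix.mul_assoc RB, mul_nonsing_inv _ hRB, Matrix.one_mul]

theorem mul_transpose_mulVec_col_of_svd [Fintype p] {C : Matrix m p ℝ} {U : Matrix m n ℝ}
    {V : Matrix p n ℝ} {σ : n → ℝ} (hC : C = U * diagonal σ * Vᵀ) (hU : Uᵀ * U = 1)
    (hV : Vᵀ * V = 1) (i : n) :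
    (C * Cᵀ) *ᵥ U.col i = σ i ^ 2 • U.col i := by
  have hCCt : C * Cᵀ = U * diagonal (σ ^ 2) * Uᵀ := by
    rw [hC, transpose_mul, transpose_mul, transpose_transpose, diagonal_transpose]
    simp only [Matrix.mul_assoc]
    rw [← Matrix.mul_assoc Vᵀ, hV, Matrix.one_mul, ← Matrix.mul_assoc (diagonal σ),
      diagonal_mul_diagonal, sq]
    rfl
  rw [hCCt, ← mulVec_single_one, mulVec_mulVec, Matrix.mul_assoc, Matrix.mul_assoc, hU,
    Matrix.mul_one, ← mulVec_mulVec, diagonal_mulVec_single, Pi.pow_apply, ← smul_eq_mul,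
    Pi.single_smul', mulVec_smul]

end

theorem inv_mul_mul_mulVec_inv_mulVec {n α : Type*} [Fintype n] [DecidableEq n] [CommRing α]
    {K R : Matrix n n α} {c : α} {u : n → α} (hR : IsUnit R.det) (hu : K *ᵥ u = c • u) :
    (R⁻¹ * K * R) *ᵥ (R⁻¹ *ᵥ u) = c • R⁻¹ *ᵥ u := by
  rw [mulVec_mulVec, Matrix.mul_assoc, Matrix.mul_assoc, mul_nonsing_inv _ hR, Matrix.mul_one,
    ← mulVec_mulVec, hu, mulVec_smul]

theorem stmt_2_general {N s : ℕ}
    (A B QA QB : Matrix (Fin N) (Fin s) ℝ)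
    (RA RB U V Sig : Matrix (Fin s) (Fin s) ℝ)
    (σ : Fin s → ℝ)
    (Adag Bdag : Matrix (Fin s) (Fin N) ℝ)
    -- thin QR decomposition of A
    (hAQR : A = QA * RA) (hQA : QAᵀ * QA = 1)
    (hRAunit : IsUnit RA.det)
    -- thin QR decomposition of B
    (hBQR : B = QB * RB) (hQB : QBᵀ * QB = 1)
    (hRBunit : IsUnit RB.det)
    -- SVD of Q_Aᵀ Q_B with U, V orthogonal and Σ = diag(σ₁,…,σ_s), σ₁ ≥ … ≥ σ_s ≥ 0
    (hUorth : Uᵀ * U = 1)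
    (hVorth : Vᵀ * V = 1)
    (hSig : Sig = Matrix.diagonal σ)
    (hSVD : QAᵀ * QB = U * Sig * Vᵀ)
    -- Moore–Penrose pseudoinverses of A and B
    (hAdag : IsMoorePenrose A Adag) (hBdag : IsMoorePenrose B Bdag)
    (i : Fin s) :
    -- vᵢ = R_A⁻¹ uᵢ where uᵢ is the i-th column of U
    ((1 : Matrix (Fin s) (Fin s) ℝ) - (Adag * B) * (Bdag * A)).mulVec
        (RA⁻¹.mulVec (fun k => U k i))
      = (1 - σ i ^ 2) • RA⁻¹.mulVec (fun k => U k i) ∧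
    A.mulVec (RA⁻¹.mulVec (fun k => U k i)) = QA.mulVec (fun k => U k i) ∧
    (∑ k, (A.mulVec (RA⁻¹.mulVec (fun k => U k i)) k) ^ 2 = 1) ∧
    A.mulVec (RA⁻¹.mulVec (fun k => U k i)) ∈ LinearMap.range A.mulVecLin := by
  rw [show (fun k => U k i) = U.col i from rfl, hAdag.unique (isMoorePenrose_of_qr hAQR hQA hRAunit),
    hBdag.unique (isMoorePenrose_of_qr hBQR hQB hRBunit)]
  have hAv : A *ᵥ (RA⁻¹ *ᵥ U.col i) = QA *ᵥ U.col i := by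
    rw [mulVec_mulVec, hAQR, Matrix.mul_assoc, mul_nonsing_inv _ hRAunit, Matrix.mul_one]
  have hQAU : (QA * U)ᵀ * (QA * U) = 1 := by
    rw [transpose_mul, Matrix.mul_assoc, ← Matrix.mul_assoc QAᵀ, hQA, Matrix.one_mul, hUorth]
  refine ⟨?_, hAv, ?_, ⟨_, rfl⟩⟩
  · rw [inv_mul_transpose_mul_mul_inv_mul_transpose_mul hAQR hBQR hRBunit, sub_mulVec,
      one_mulVec, inv_mul_mul_mulVec_inv_mulVec hRAunit
        (mul_transpose_mulVec_col_of_svd (hSig ▸ hSVD) hUorth hVorth i), sub_smul, one_smul]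
  · rw [hAv, ← mulVec_single_one, mulVec_mulVec, mulVec_single_one]
    exact sum_sq_col_eq_one hQAU i

/-- With `A = Q_A R_A`, `B = Q_B R_B` thin QR decompositions of the
full-column-rank matrices `A, B ∈ ℝ^{N×s}` and `Q_Aᵀ Q_B = U Σ Vᵀ` an SVD, for each `i` the
vector `vᵢ := R_A⁻¹ uᵢ` (with `uᵢ` the `i`-th column of `U`) satisfies
(1) `(I − (A†B)(B†A)) vᵢ = (1 − σᵢ²) vᵢ`, and
(2) `A vᵢ = Q_A uᵢ`, a unit vector lying in the column space of `A`. -/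
theorem stmt_2 {N s : ℕ}
    (A B QA QB : Matrix (Fin N) (Fin s) ℝ)
    (RA RB U V Sig : Matrix (Fin s) (Fin s) ℝ)
    (σ : Fin s → ℝ)
    (Adag Bdag : Matrix (Fin s) (Fin N) ℝ)
    -- full column rank
    (hArank : A.rank = s) (hBrank : B.rank = s)
    -- thin QR decomposition of A
    (hAQR : A = QA * RA) (hQA : QAᵀ * QA = 1)
    (hRAtri : RA.BlockTriangular id) (hRAunit : IsUnit RA.det)
    -- thin QR decomposition of B
    (hBQR : B = QB * RB) (hQB : QBᵀ * QB = 1)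
    (hRBtri : RB.BlockTriangular id) (hRBunit : IsUnit RB.det)
    -- SVD of Q_Aᵀ Q_B with U, V orthogonal and Σ = diag(σ₁,…,σ_s), σ₁ ≥ … ≥ σ_s ≥ 0
    (hUorth : Uᵀ * U = 1) (hUorth' : U * Uᵀ = 1)
    (hVorth : Vᵀ * V = 1) (hVorth' : V * Vᵀ = 1)
    (hSig : Sig = Matrix.diagonal σ)
    (hσdec : Antitone σ) (hσnonneg : ∀ i, 0 ≤ σ i)
    (hSVD : QAᵀ * QB = U * Sig * Vᵀ)
    -- Moore–Penrose pseudoinverses of A and B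
    (hAdag : IsMoorePenrose A Adag) (hBdag : IsMoorePenrose B Bdag)
    (i : Fin s) :
    -- vᵢ = R_A⁻¹ uᵢ where uᵢ is the i-th column of U
    ((1 : Matrix (Fin s) (Fin s) ℝ) - (Adag * B) * (Bdag * A)).mulVec
        (RA⁻¹.mulVec (fun k => U k i))
      = (1 - σ i ^ 2) • RA⁻¹.mulVec (fun k => U k i) ∧
    A.mulVec (RA⁻¹.mulVec (fun k => U k i)) = QA.mulVec (fun k => U k i) ∧
    (∑ k, (A.mulVec (RA⁻¹.mulVec (fun k => U k i)) k) ^ 2 = 1) ∧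
    A.mulVec (RA⁻¹.mulVec (fun k => U k i)) ∈ LinearMap.range A.mulVecLin :=
  stmt_2_general A B QA QB RA RB U V Sig σ Adag Bdag hAQR hQA hRAunit hBQR hQB hRBunit hUorth hVorth
    hSig hSVD hAdag hBdag i
end

section
/- Let A, B ∈ ℝ^{N×s} both have full column rank, let λ_max be the largest eigenvalue of the consistency matrix M_c = I_s − (A†B)(B†A), and let v be an eigenvector of M_c with eigenvalue λ_max. Then the unit vector u* = A v / ‖A v‖ attains the supremum sup { ‖u − B B† u‖² : u ∈ col(A), ‖u‖ = 1 }; that is, ‖u* − B B† u*‖² = λ_max and this is the maximal value of ‖u − B B† u‖² over unit u ∈ col(A). -/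
/-!
Put `Q = 1 - B B†`, an orthogonal projection, and `G = Aᵀ A`, which is positive definite
because `A` has full column rank. For `u = A w` the objective `‖Q u‖²` is `wᵀ (Aᵀ Q A) w`
and `‖u‖² = wᵀ G w`. The Penrose identities give `G M_c = Aᵀ Q A`, so `M_c` is conjugate
under `G^{1/2}` to the symmetric matrix `G^{-1/2} (Aᵀ Q A) G^{-1/2}`, whose spectrum is
therefore bounded by `λ_max`. Hence `Aᵀ Q A ≤ λ_max G` in the Loewner order, and the
eigenvector `v` turns this into an equality.
-/

open Matrix

theorem Matrix.mulVec_injective_of_rank_eq_card {m n K : Type*} [Fintype m] [Fintype n] [Field K]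
    (A : Matrix m n K) (h : A.rank = Fintype.card n) : Function.Injective A.mulVec := by
  have hdim := A.mulVecLin.finrank_range_add_finrank_ker
  rw [← rank, h, Module.finrank_fintype_fun_eq_card] at hdim
  have hker : LinearMap.ker A.mulVecLin = ⊥ := Submodule.finrank_eq_zero.mp (by omega)
  exact LinearMap.ker_eq_bot.mp hker

theorem Matrix.posDef_transpose_mul_self_of_rank_eq_card {m n : Type*} [Fintype m] [Fintype n]
    (A : Matrix m n ℝ) (h : A.rank = Fintype.card n) : (Aᵀ * A).PosDef := by
  simpa only [conjTranspose_eq_transpose_of_trivial] using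
    PosDef.conjTranspose_mul_self A (A.mulVec_injective_of_rank_eq_card h)

theorem sum_sq_eq_dotProduct_self {n : Type*} [Fintype n] (x : n → ℝ) :
    ∑ i, x i ^ 2 = x ⬝ᵥ x := by
  simp only [dotProduct, sq]

theorem mulVec_dotProduct_mulVec {m n R : Type*} [Fintype m] [Fintype n] [CommSemiring R]
    (A : Matrix m n R) (Q : Matrix m m R) (w : n → R) :
    A *ᵥ w ⬝ᵥ Q *ᵥ (A *ᵥ w) = w ⬝ᵥ (Aᵀ * Q * A) *ᵥ w := by
  rw [← mulVec_mulVec, ← mulVec_mulVec, dotProduct_transpose_mulVec, dotProduct_comm]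

theorem mulVec_dotProduct_mulVec_self {m n R : Type*} [Fintype m] [Fintype n] [CommSemiring R]
    (A : Matrix m n R) (w : n → R) : A *ᵥ w ⬝ᵥ A *ᵥ w = w ⬝ᵥ (Aᵀ * A) *ᵥ w := by
  rw [← mulVec_mulVec, dotProduct_transpose_mulVec]

theorem smul_dotProduct_mulVec_smul {n R : Type*} [Fintype n] [CommSemiring R]
    (t : R) (Q : Matrix n n R) (x : n → R) :
    t • x ⬝ᵥ Q *ᵥ (t • x) = t ^ 2 * (x ⬝ᵥ Q *ᵥ x) := by
  rw [mulVec_smul, smul_dotProduct, dotProduct_smul, smul_eq_mul, smul_eq_mul, sq, mul_assoc]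

theorem IsStarProjection.mulVec_dotProduct_mulVec_self {n : Type*} [Fintype n]
    {P : Matrix n n ℝ} (hP : IsStarProjection P) (u : n → ℝ) :
    P *ᵥ u ⬝ᵥ P *ᵥ u = u ⬝ᵥ P *ᵥ u := by
  have hPT : Pᵀ = P := by
    rw [← conjTranspose_eq_transpose_of_trivial, ← star_eq_conjTranspose]
    exact hP.isSelfAdjoint
  rw [dotProduct_mulVec, ← mulVec_transpose, mulVec_mulVec, hPT, hP.isIdempotentElem.eq,
    dotProduct_comm]

section MoorePenrose

variable {N s : ℕ} {A : Matrix (Fin N) (Fin s) ℝ} {Adag : Matrix (Fin s) (Fin N) ℝ}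

theorem IsMoorePenrose.transpose_mul_self_mul (h : IsMoorePenrose A Adag) :
    Aᵀ * A * Adag = Aᵀ := by
  rw [Matrix.mul_assoc, ← h.2.2.1, ← transpose_mul, h.1]

theorem IsMoorePenrose.isStarProjection_mul (h : IsMoorePenrose A Adag) :
    IsStarProjection (A * Adag) where
  isIdempotentElem := by
    rw [IsIdempotentElem, Matrix.mul_assoc, ← Matrix.mul_assoc Adag, h.2.1]
  isSelfAdjoint := by
    rw [IsSelfAdjoint, star_eq_conjTranspose, conjTranspose_eq_transpose_of_trivial, h.2.2.1]

theorem IsMoorePenrose.sum_sq_sub_mulVec_mulVec (h : IsMoorePenrose A Adag) (u : Fin N → ℝ) :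
    ∑ i, ((u - A *ᵥ (Adag *ᵥ u)) i) ^ 2 = u ⬝ᵥ (1 - A * Adag) *ᵥ u := by
  rw [sum_sq_eq_dotProduct_self, ← h.isStarProjection_mul.one_sub.mulVec_dotProduct_mulVec_self,
    sub_mulVec, one_mulVec, mulVec_mulVec]

theorem IsMoorePenrose.transpose_mul_self_mul_consistency (h : IsMoorePenrose A Adag)
    (B : Matrix (Fin N) (Fin s) ℝ) (Bdag : Matrix (Fin s) (Fin N) ℝ) :
    Aᵀ * A * (1 - Adag * B * (Bdag * A)) = Aᵀ * (1 - B * Bdag) * A := by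
  simp only [Matrix.mul_sub, Matrix.sub_mul, Matrix.mul_one, ← Matrix.mul_assoc,
    h.transpose_mul_self_mul]

end MoorePenrose

section
open scoped MatrixOrder

theorem le_smul_of_forall_eigenvalue_le {n : Type*} [Fintype n] [DecidableEq n]
    {G K M : Matrix n n ℝ} (hG : G.PosDef) (hK : K.IsHermitian) (hGM : G * M = K) {c : ℝ}
    (hc : ∀ (μ : ℝ) (w : n → ℝ), w ≠ 0 → M *ᵥ w = μ • w → μ ≤ c) :
    K ≤ c • G := by
  obtain ⟨T, hT⟩ : IsUnit (CFC.sqrt G) :=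
    isUnit_of_mul_isUnit_left ((CFC.sqrt_mul_sqrt_self G hG.posSemidef.nonneg).symm ▸ hG.isUnit)
  have hTT : (T * T : Matrix n n ℝ) = G := hT ▸ CFC.sqrt_mul_sqrt_self G hG.posSemidef.nonneg
  have hT0 : 0 ≤ (T : Matrix n n ℝ) := hT ▸ CFC.sqrt_nonneg G
  set Ti : Matrix n n ℝ := ((T⁻¹ : (Matrix n n ℝ)ˣ) : Matrix n n ℝ) with hTi
  have hTi_herm : Ti.IsHermitian := by
    rw [hTi, coe_units_inv]
    exact IsHermitian.inv hT0.isSelfAdjoint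
  -- `M Ti = Ti H`, so every eigenvalue of `H` is an eigenvalue of `M`.
  set H : Matrix n n ℝ := Ti * K * Ti with hH
  have hKH : K = T * H * T := by simp [hH, hTi, mul_assoc]
  have hMT : M * Ti = Ti * H := by
    rw [← hGM, ← hTT] at hKH
    calc M * Ti = Ti * (Ti * (T * T * M)) * Ti := by simp [hTi, mul_assoc]
      _ = _ := by rw [hKH]; simp [hTi, hH, mul_assoc]
  have hHc : H ≤ algebraMap ℝ _ c := by
    have hH_herm : IsSelfAdjoint H := by
      simpa only [star_eq_conjTranspose, hTi_herm.eq] using hK.isSelfAdjoint.conjugate Ti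
    refine le_algebraMap_of_spectrum_le (fun μ hμ => ?_) hH_herm
    rw [← spectrum_toLin', ← Module.End.hasEigenvalue_iff_mem_spectrum] at hμ
    obtain ⟨y, hy⟩ := hμ.exists_hasEigenvector
    refine hc μ (Ti *ᵥ y) (fun h0 => hy.2 ?_) ?_
    · simpa [hTi, h0] using congrArg ((T : Matrix n n ℝ) *ᵥ ·) h0
    · have hHy : H *ᵥ y = μ • y := hy.apply_eq_smul
      rw [mulVec_mulVec, hMT, ← mulVec_mulVec, hHy, mulVec_smul]
  calc K = T * H * T := hKH
    _ ≤ T * algebraMap ℝ _ c * T := conjugate_le_conjugate_of_nonneg hHc hT0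
    _ = c • G := by rw [Algebra.algebraMap_eq_smul_one, ← hTT]; simp

theorem dotProduct_mulVec_le_of_forall_eigenvalue_le {n : Type*} [Fintype n] [DecidableEq n]
    {G K M : Matrix n n ℝ} (hG : G.PosDef) (hK : K.IsHermitian) (hGM : G * M = K) {c : ℝ}
    (hc : ∀ (μ : ℝ) (w : n → ℝ), w ≠ 0 → M *ᵥ w = μ • w → μ ≤ c) (w : n → ℝ) :
    w ⬝ᵥ K *ᵥ w ≤ c * (w ⬝ᵥ G *ᵥ w) := by
  have h := (le_iff.mp (le_smul_of_forall_eigenvalue_le hG hK hGM hc)).dotProduct_mulVec_nonneg w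
  rwa [sub_mulVec, smul_mulVec, dotProduct_sub, dotProduct_smul, smul_eq_mul, star_trivial,
    sub_nonneg] at h

end

theorem stmt_6_general {N s : ℕ}
    (A B : Matrix (Fin N) (Fin s) ℝ)
    (Adag Bdag : Matrix (Fin s) (Fin N) ℝ)
    (hArank : A.rank = s)
    (hAdag : IsMoorePenrose A Adag) (hBdag : IsMoorePenrose B Bdag)
    (lamMax : ℝ)
    (hlam : IsGreatest {μ : ℝ | ∃ w : Fin s → ℝ, w ≠ 0 ∧
      ((1 : Matrix (Fin s) (Fin s) ℝ) - (Adag * B) * (Bdag * A)).mulVec w = μ • w} lamMax)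
    (v : Fin s → ℝ) (hv : v ≠ 0)
    (heig : ((1 : Matrix (Fin s) (Fin s) ℝ) - (Adag * B) * (Bdag * A)).mulVec v
      = lamMax • v) :
    -- u* = A v / ‖A v‖
    let ustar : Fin N → ℝ := (Real.sqrt (∑ i, (A.mulVec v i) ^ 2))⁻¹ • A.mulVec v
    (∑ i, ((ustar - B.mulVec (Bdag.mulVec ustar)) i) ^ 2 = lamMax) ∧
    IsGreatest {r : ℝ | ∃ u : Fin N → ℝ, u ∈ LinearMap.range A.mulVecLin ∧
        (∑ i, (u i) ^ 2 = 1) ∧ r = ∑ i, ((u - B.mulVec (Bdag.mulVec u)) i) ^ 2}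
      (∑ i, ((ustar - B.mulVec (Bdag.mulVec ustar)) i) ^ 2) := by
  intro ustar
  set Q : Matrix (Fin N) (Fin N) ℝ := 1 - B * Bdag
  have hQ : IsStarProjection Q := hBdag.isStarProjection_mul.one_sub
  have hG := A.posDef_transpose_mul_self_of_rank_eq_card (by simpa using hArank)
  have hK : (Aᵀ * Q * A).IsHermitian := by
    simpa only [conjTranspose_eq_transpose_of_trivial] using
      isHermitian_conjTranspose_mul_mul A hQ.isSelfAdjoint
  have hGM := hAdag.transpose_mul_self_mul_consistency B Bdag
  have hbound := dotProduct_mulVec_le_of_forall_eigenvalue_le hG hK hGM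
    (fun μ w hw hμ => hlam.2 ⟨w, hw, hμ⟩)
  set d := A *ᵥ v ⬝ᵥ A *ᵥ v
  have hd : 0 < d := by
    simpa only [d, mulVec_dotProduct_mulVec_self, star_trivial] using hG.dotProduct_mulVec_pos hv
  have hustar : ustar = (√d)⁻¹ • A *ᵥ v := by simp only [ustar, d, sum_sq_eq_dotProduct_self]
  have hscale : ((√d)⁻¹) ^ 2 * d = 1 := by rw [inv_pow, Real.sq_sqrt hd.le, inv_mul_cancel₀ hd.ne']
  have hval : ∑ i, ((ustar - B *ᵥ (Bdag *ᵥ ustar)) i) ^ 2 = lamMax := by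
    rw [hBdag.sum_sq_sub_mulVec_mulVec, hustar, smul_dotProduct_mulVec_smul,
      mulVec_dotProduct_mulVec, ← hGM, ← mulVec_mulVec, heig, mulVec_smul, dotProduct_smul,
      smul_eq_mul, ← mulVec_dotProduct_mulVec_self, mul_left_comm, hscale, mul_one]
  have hnorm : ∑ i, ustar i ^ 2 = 1 := by
    rw [sum_sq_eq_dotProduct_self, hustar, smul_dotProduct, dotProduct_smul, smul_eq_mul,
      smul_eq_mul, ← mul_assoc, ← sq, hscale]
  refine ⟨hval, ⟨ustar, ⟨(√d)⁻¹ • v, by rw [mulVecLin_apply, mulVec_smul, hustar]⟩, hnorm, rfl⟩, ?_⟩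
  rintro r ⟨u, ⟨w, rfl⟩, hu, rfl⟩
  rw [hval, hBdag.sum_sq_sub_mulVec_mulVec, mulVecLin_apply]
  calc A *ᵥ w ⬝ᵥ Q *ᵥ (A *ᵥ w) = w ⬝ᵥ (Aᵀ * Q * A) *ᵥ w := mulVec_dotProduct_mulVec A Q w
    _ ≤ lamMax * (w ⬝ᵥ (Aᵀ * A) *ᵥ w) := hbound w
    _ = lamMax := by
      rw [← mulVec_dotProduct_mulVec_self, ← sum_sq_eq_dotProduct_self, ← mulVecLin_apply, hu,
        mul_one]

/-- Let `A, B ∈ ℝ^{N×s}` both have full column rank, `λ_max` the largest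
eigenvalue of `M_c = I − (A†B)(B†A)`, and `v` an eigenvector of `M_c` for `λ_max`. Then the
unit vector `u* = A v / ‖A v‖` attains the supremum of `‖u − B B† u‖²` over unit vectors
`u ∈ col(A)`: the value at `u*` equals `λ_max` and is the greatest element of that set. -/
theorem stmt_6 {N s : ℕ}
    (A B : Matrix (Fin N) (Fin s) ℝ)
    (Adag Bdag : Matrix (Fin s) (Fin N) ℝ)
    (hArank : A.rank = s) (hBrank : B.rank = s)
    (hAdag : IsMoorePenrose A Adag) (hBdag : IsMoorePenrose B Bdag)
    (lamMax : ℝ)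
    (hlam : IsGreatest {μ : ℝ | ∃ w : Fin s → ℝ, w ≠ 0 ∧
      ((1 : Matrix (Fin s) (Fin s) ℝ) - (Adag * B) * (Bdag * A)).mulVec w = μ • w} lamMax)
    (v : Fin s → ℝ) (hv : v ≠ 0)
    (heig : ((1 : Matrix (Fin s) (Fin s) ℝ) - (Adag * B) * (Bdag * A)).mulVec v
      = lamMax • v) :
    -- u* = A v / ‖A v‖
    let ustar : Fin N → ℝ := (Real.sqrt (∑ i, (A.mulVec v i) ^ 2))⁻¹ • A.mulVec v
    (∑ i, ((ustar - B.mulVec (Bdag.mulVec ustar)) i) ^ 2 = lamMax) ∧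
    IsGreatest {r : ℝ | ∃ u : Fin N → ℝ, u ∈ LinearMap.range A.mulVecLin ∧
        (∑ i, (u i) ^ 2 = 1) ∧ r = ∑ i, ((u - B.mulVec (Bdag.mulVec u)) i) ^ 2}
      (∑ i, ((ustar - B.mulVec (Bdag.mulVec ustar)) i) ^ 2) :=
  stmt_6_general A B Adag Bdag hArank hAdag hBdag lamMax hlam v hv heig
end

section
/- Let H be a real inner product space, let V ⊆ H be a finite-dimensional subspace, let u_1,…,u_a be an orthonormal family in H, let v_1,…,v_a be an orthonormal family in V, and let σ_1 ≥ σ_2 ≥ … ≥ σ_a ≥ 0 satisfy P_V u_j = σ_j v_j for all j ∈ {1,…,a}. Then for every k ∈ {1,…,a}: inf { ‖P_V x‖ / ‖x‖ : x ∈ span(u_1,…,u_{a−k+1}), x ≠ 0 } = σ_{a−k+1}, and the infimum is attained at x = u_{a−k+1}. -/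
/-!
Write `x = ∑ cᵢ uᵢ` with `cᵢ = 0` unless `i ≤ a − k`. Then `P_V x = ∑ cᵢ σᵢ vᵢ`, and
orthonormality of both families gives `‖x‖² = ∑ cᵢ²` and `‖P_V x‖² = ∑ cᵢ² σᵢ²`. Every `σᵢ`
occurring is at least `σ_{a−k}`, so `‖P_V x‖ ≥ σ_{a−k} ‖x‖`, with equality at `x = u_{a−k}`.
-/

open Submodule

theorem Orthonormal.norm_sum_smul_sq {ι E : Type*} [Fintype ι] [NormedAddCommGroup E]
    [InnerProductSpace ℝ E] {w : ι → E} (hw : Orthonormal ℝ w) (c : ι → ℝ) :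
    ‖∑ i, c i • w i‖ ^ 2 = ∑ i, c i ^ 2 := by
  rw [← real_inner_self_eq_norm_sq, hw.inner_sum]
  simp only [conj_trivial, sq]

theorem Orthonormal.mul_norm_le_norm_map_of_mem_span {ι E F 𝓕 : Type*} [NormedAddCommGroup E]
    [InnerProductSpace ℝ E] [NormedAddCommGroup F] [InnerProductSpace ℝ F] [FunLike 𝓕 E F]
    [LinearMapClass 𝓕 ℝ E F] {u : ι → E} {v : ι → F} (hu : Orthonormal ℝ u)
    (hv : Orthonormal ℝ v) (T : 𝓕) {σ : ι → ℝ} (hT : ∀ i, T (u i) = σ i • v i) {s : Set ι}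
    {c : ℝ} (hc : 0 ≤ c) (hσ : ∀ i ∈ s, c ≤ |σ i|) {x : E} (hx : x ∈ span ℝ (u '' s)) :
    c * ‖x‖ ≤ ‖T x‖ := by
  obtain ⟨t, hts, l, rfl⟩ := (mem_span_image_iff_exists_fun ℝ).mp hx
  have hTx : T (∑ i, l i • u i) = ∑ i, (l i * σ i) • v i := by
    simp only [map_sum, map_smul, hT, smul_smul]
  have hut : Orthonormal ℝ fun i : t ↦ u i := hu.comp _ Subtype.val_injective
  have hvt : Orthonormal ℝ fun i : t ↦ v i := hv.comp _ Subtype.val_injective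
  rw [← pow_le_pow_iff_left₀ (by positivity) (norm_nonneg _) two_ne_zero, mul_pow, hTx,
    hut.norm_sum_smul_sq, hvt.norm_sum_smul_sq, Finset.mul_sum]
  refine Finset.sum_le_sum fun i _ ↦ ?_
  have hcσ : c ^ 2 ≤ σ i ^ 2 := by
    simpa only [sq_abs] using pow_le_pow_left₀ hc (hσ i (hts i.2)) 2
  nlinarith [sq_nonneg (l i)]

/-- Let `V` be a finite-dimensional subspace of a real inner product
space, `u₁,…,u_a` orthonormal, `v₁,…,v_a` orthonormal in `V`, and `σ₁ ≥ … ≥ σ_a ≥ 0` with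
`P_V uⱼ = σⱼ vⱼ`.  Then for every `k ∈ {1,…,a}`,
`inf { ‖P_V x‖/‖x‖ : x ∈ span(u₁,…,u_{a−k+1}), x ≠ 0 } = σ_{a−k+1}`, and the infimum is
attained at `x = u_{a−k+1}`.  (Indices are `0`-based below: `a−k+1 ↔ ⟨a−k, _⟩`.) -/
theorem stmt_16 {H : Type*} [NormedAddCommGroup H] [InnerProductSpace ℝ H] {a : ℕ}
    (V : Submodule ℝ H) [FiniteDimensional ℝ V]
    (u v : Fin a → H) (hu : Orthonormal ℝ u) (hv : Orthonormal ℝ v)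
    (σ : Fin a → ℝ) (hσdec : Antitone σ) (hσnonneg : ∀ j, 0 ≤ σ j)
    (hproj : ∀ j, (V.orthogonalProjection (u j) : H) = σ j • v j)
    (k : ℕ) (hk1 : 1 ≤ k) (hka : k ≤ a) :
    IsLeast {r : ℝ | ∃ x ∈ Submodule.span ℝ (u '' {i : Fin a | (i : ℕ) ≤ a - k}),
        x ≠ 0 ∧ r = ‖(V.orthogonalProjection x : H)‖ / ‖x‖}
      (σ ⟨a - k, by omega⟩) ∧
    ‖(V.orthogonalProjection (u ⟨a - k, by omega⟩) : H)‖ / ‖u ⟨a - k, by omega⟩‖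
      = σ ⟨a - k, by omega⟩ := by
  set m : Fin a := ⟨a - k, by omega⟩
  have hattain : ‖(V.orthogonalProjection (u m) : H)‖ / ‖u m‖ = σ m := by
    rw [hproj, norm_smul, hv.1 m, hu.1 m, Real.norm_of_nonneg (hσnonneg m), mul_one, div_one]
  refine ⟨⟨⟨u m, subset_span (Set.mem_image_of_mem u (le_refl (a - k))), hu.ne_zero m, hattain.symm⟩, ?_⟩,
    hattain⟩
  rintro r ⟨x, hx, hx0, rfl⟩
  rw [le_div_iff₀ (norm_pos_iff.mpr hx0), ← starProjection_apply]
  refine hu.mul_norm_le_norm_map_of_mem_span hv V.starProjection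
    (fun j ↦ by rw [starProjection_apply, hproj]) (hσnonneg m) (fun i hi ↦ ?_) hx
  rw [abs_of_nonneg (hσnonneg i)]
  exact hσdec (Fin.le_def.mpr hi)
end
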